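/- Let 0 < γ < 1 and β₁, β₂ > 0, and let f : ℝ² → ℝ be a continuous function satisfying β₁‖x‖² ≤ f(x) ≤ β₂‖x‖² for all x with 0 < ‖x‖ < γ. Define V(x) = −2·log( (1/√2)·log(1/‖x‖) ). Then h₁(x) = V(x) − log β₁ satisfies Δh₁(x) − f(x)·‖x‖⁻⁴·exp(h₁(x)) ≤ 0 (h₁ is a supersolution), and h₂(x) = V(x) − log β₂ satisfies Δh₂(x) − f(x)·‖x‖⁻⁴·exp(h₂(x)) ≥ 0 (h₂ is a subsolution), for all x with 0 < ‖x‖ < γ. -/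

import Mathlib

/-- The Euclidean Laplacian on `ℝ²`: `Δu = ∂²u/∂x₁² + ∂²u/∂x₂²`. -/
noncomputable def laplacian (u : EuclideanSpace ℝ (Fin 2) → ℝ)
    (x : EuclideanSpace ℝ (Fin 2)) : ℝ :=
  ∑ i : Fin 2,
    fderiv ℝ (fun y => fderiv ℝ u y (EuclideanSpace.single i 1)) x (EuclideanSpace.single i 1)

/-!
Writing `s = ‖x‖²`, the potential is `V x = G s` with `G s = -2 log (-log s / (2√2))`. In the plane
a radial function `φ (‖x‖²)` has Laplacian `4 φ'(s) + 4 s φ''(s)`, which for `G` equals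
`8 / (s log² s) = e^{G s} / s`; so `V` solves `ΔV = ‖x‖⁻² e^V` exactly. For `h = V - log β` this gives
`Δh - f ‖x‖⁻⁴ e^h = (β ‖x‖² - f) ‖x‖⁻⁴ e^h`, whose sign is that of `β ‖x‖² - f`.
-/

open Real Filter Topology
open scoped RealInnerProductSpace

section Radial

variable {E : Type*} [NormedAddCommGroup E] [InnerProductSpace ℝ E] {φ φ' : ℝ → ℝ} {d : ℝ} {x : E}

theorem fderiv_comp_norm_sq_apply (hφ : HasDerivAt φ d (‖x‖ ^ 2)) (v : E) :
    fderiv ℝ (fun y => φ (‖y‖ ^ 2)) x v = d * (2 * ⟪x, v⟫) := by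
  have h : HasFDerivAt (fun y => φ (‖y‖ ^ 2)) (d • 2 • innerSL ℝ x) x :=
    hφ.comp_hasFDerivAt x (hasStrictFDerivAt_norm_sq x).hasFDerivAt
  rw [h.fderiv]
  simp

theorem fderiv_fderiv_comp_norm_sq_apply (hφ : ∀ᶠ t in 𝓝 (‖x‖ ^ 2), HasDerivAt φ (φ' t) t)
    (hφ' : HasDerivAt φ' d (‖x‖ ^ 2)) (v : E) :
    fderiv ℝ (fun y => fderiv ℝ (fun z => φ (‖z‖ ^ 2)) y v) x v =
      2 * φ' (‖x‖ ^ 2) * ‖v‖ ^ 2 + 4 * d * ⟪x, v⟫ ^ 2 := by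
  have hfirst : (fun y => fderiv ℝ (fun z => φ (‖z‖ ^ 2)) y v) =ᶠ[𝓝 x]
      fun y => φ' (‖y‖ ^ 2) * (2 * ⟪y, v⟫) := by
    filter_upwards [((continuous_norm.pow 2).tendsto x).eventually hφ] with y hy
    exact fderiv_comp_norm_sq_apply hy v
  have hinner : HasFDerivAt (fun y => 2 * ⟪y, v⟫) ((2 : ℝ) • innerSL ℝ v) x := by
    simpa [real_inner_comm] using ((innerSL ℝ v).hasFDerivAt (x := x)).const_mul (2 : ℝ)
  have houter : HasFDerivAt (fun y => φ' (‖y‖ ^ 2)) (d • 2 • innerSL ℝ x) x :=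
    hφ'.comp_hasFDerivAt x (hasStrictFDerivAt_norm_sq x).hasFDerivAt
  have hsecond := houter.fun_mul hinner
  rw [hfirst.fderiv_eq, hsecond.fderiv]
  simp only [add_apply, smul_apply, innerSL_apply_apply,
    real_inner_self_eq_norm_sq, smul_eq_mul, nsmul_eq_mul, Nat.cast_ofNat]
  ring

theorem laplacian_comp_norm_sq {x : EuclideanSpace ℝ (Fin 2)}
    (hφ : ∀ᶠ t in 𝓝 (‖x‖ ^ 2), HasDerivAt φ (φ' t) t) (hφ' : HasDerivAt φ' d (‖x‖ ^ 2)) :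
    laplacian (fun y => φ (‖y‖ ^ 2)) x = 4 * φ' (‖x‖ ^ 2) + 4 * ‖x‖ ^ 2 * d := by
  simp only [laplacian, fderiv_fderiv_comp_norm_sq_apply hφ hφ', PiLp.norm_single,
    EuclideanSpace.inner_single_right, EuclideanSpace.real_norm_sq_eq x, Fin.sum_univ_two]
  simp only [Fin.isValue, norm_one, one_pow, mul_one, ringHom_apply, one_mul]
  ring

end Radial

theorem laplacian_sub_const (u : EuclideanSpace ℝ (Fin 2) → ℝ) (c : ℝ) :
    laplacian (fun y => u y - c) = laplacian u := by
  ext x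
  simp only [laplacian, fderiv_sub_const]

noncomputable def logLogProfile (s : ℝ) : ℝ := -2 * log (-log s / (2 * √2))

section Profile

variable {s : ℝ}

theorem hasDerivAt_logLogProfile (hs0 : 0 < s) (hs1 : s < 1) :
    HasDerivAt logLogProfile (-2 / (s * log s)) s := by
  have hlog : log s < 0 := log_neg hs0 hs1
  have harg : -log s / (2 * √2) ≠ 0 := div_ne_zero (neg_ne_zero.2 hlog.ne) (by positivity)
  have h : HasDerivAt logLogProfile (-2 * (-s⁻¹ / (2 * √2) / (-log s / (2 * √2)))) s :=
    (((hasDerivAt_log hs0.ne').fun_neg.div_const (2 * √2)).log harg).const_mul (-2 : ℝ)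
  refine h.congr_deriv ?_
  field_simp [hlog.ne]

theorem hasDerivAt_neg_two_div_mul_log (hs0 : 0 < s) (hs1 : s < 1) :
    HasDerivAt (fun t => -2 / (t * log t)) (2 * (log s + 1) / (s * log s) ^ 2) s := by
  have hlog : log s < 0 := log_neg hs0 hs1
  have h := (hasDerivAt_const s (-2 : ℝ)).fun_div
    ((hasDerivAt_id' s).fun_mul (hasDerivAt_log hs0.ne')) (mul_ne_zero hs0.ne' hlog.ne)
  refine h.congr_deriv ?_
  field_simp [hlog.ne]
  ring

theorem exp_logLogProfile (hs0 : 0 < s) (hs1 : s < 1) :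
    exp (logLogProfile s) = 8 / log s ^ 2 := by
  have harg : 0 < -log s / (2 * √2) := div_pos (neg_pos.2 (log_neg hs0 hs1)) (by positivity)
  rw [logLogProfile, mul_comm, exp_mul, exp_log harg, rpow_neg harg.le, rpow_two, div_pow,
    mul_pow, sq_sqrt zero_le_two, neg_sq]
  field_simp
  norm_num

end Profile

theorem laplacian_logLogProfile {x : EuclideanSpace ℝ (Fin 2)} (hx0 : 0 < ‖x‖) (hx1 : ‖x‖ < 1) :
    laplacian (fun y => logLogProfile (‖y‖ ^ 2)) x = exp (logLogProfile (‖x‖ ^ 2)) / ‖x‖ ^ 2 := by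
  have hs0 : 0 < ‖x‖ ^ 2 := by positivity
  have hs1 : ‖x‖ ^ 2 < 1 := by nlinarith
  have hnear : ∀ᶠ t in 𝓝 (‖x‖ ^ 2), HasDerivAt logLogProfile (-2 / (t * log t)) t := by
    filter_upwards [Ioo_mem_nhds hs0 hs1] with t ht using hasDerivAt_logLogProfile ht.1 ht.2
  rw [laplacian_comp_norm_sq hnear (hasDerivAt_neg_two_div_mul_log hs0 hs1),
    exp_logLogProfile hs0 hs1]
  have hlog : log (‖x‖ ^ 2) ≠ 0 := (log_neg hs0 hs1).ne
  field_simp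
  ring

theorem laplacian_sub_nonlinearity_logLogProfile {β : ℝ} (hβ : 0 < β)
    (f : EuclideanSpace ℝ (Fin 2) → ℝ) {x : EuclideanSpace ℝ (Fin 2)} (hx0 : 0 < ‖x‖)
    (hx1 : ‖x‖ < 1) :
    laplacian (fun y => logLogProfile (‖y‖ ^ 2) - log β) x
        - f x * (‖x‖ ^ 4)⁻¹ * exp (logLogProfile (‖x‖ ^ 2) - log β) =
      (β * ‖x‖ ^ 2 - f x) * ((‖x‖ ^ 4)⁻¹ * exp (logLogProfile (‖x‖ ^ 2) - log β)) := by
  rw [laplacian_sub_const, laplacian_logLogProfile hx0 hx1, exp_sub, exp_log hβ]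
  field_simp

theorem logLogProfile_norm_sq (x : EuclideanSpace ℝ (Fin 2)) :
    logLogProfile (‖x‖ ^ 2) = -2 * log ((1 / √2) * log (1 / ‖x‖)) := by
  rw [logLogProfile, log_pow, one_div ‖x‖, log_inv, Nat.cast_ofNat]
  congr 2
  field_simp

theorem stmt3_general (γ β₁ β₂ : ℝ) (hγ1 : γ < 1) (hβ₁ : 0 < β₁) (hβ₂ : 0 < β₂)
    (f : EuclideanSpace ℝ (Fin 2) → ℝ)
    (hbound : ∀ x : EuclideanSpace ℝ (Fin 2), 0 < ‖x‖ → ‖x‖ < γ →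
      β₁ * ‖x‖ ^ 2 ≤ f x ∧ f x ≤ β₂ * ‖x‖ ^ 2)
    (V h₁ h₂ : EuclideanSpace ℝ (Fin 2) → ℝ)
    (hV : ∀ x, V x = -2 * Real.log ((1 / Real.sqrt 2) * Real.log (1 / ‖x‖)))
    (hh₁ : ∀ x, h₁ x = V x - Real.log β₁)
    (hh₂ : ∀ x, h₂ x = V x - Real.log β₂) :
    ∀ x : EuclideanSpace ℝ (Fin 2), 0 < ‖x‖ → ‖x‖ < γ →
      laplacian h₁ x - f x * (‖x‖ ^ 4)⁻¹ * Real.exp (h₁ x) ≤ 0 ∧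
      0 ≤ laplacian h₂ x - f x * (‖x‖ ^ 4)⁻¹ * Real.exp (h₂ x) := by
  intro x hx0 hxγ
  have hx1 : ‖x‖ < 1 := hxγ.trans hγ1
  have hV_profile : ∀ y, V y = logLogProfile (‖y‖ ^ 2) := fun y => by rw [hV, logLogProfile_norm_sq]
  have hh₁' : h₁ = fun y => logLogProfile (‖y‖ ^ 2) - log β₁ := funext fun y => by rw [hh₁, hV_profile]
  have hh₂' : h₂ = fun y => logLogProfile (‖y‖ ^ 2) - log β₂ := funext fun y => by rw [hh₂, hV_profile]
  obtain ⟨hlower, hupper⟩ := hbound x hx0 hxγ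
  subst hh₁' hh₂'
  rw [laplacian_sub_nonlinearity_logLogProfile hβ₁ f hx0 hx1,
    laplacian_sub_nonlinearity_logLogProfile hβ₂ f hx0 hx1]
  constructor
  · exact mul_nonpos_of_nonpos_of_nonneg (by linarith) (by positivity)
  · exact mul_nonneg (by linarith) (by positivity)

/-- If `0 < γ < 1`, `β₁, β₂ > 0` and `f` is continuous with `β₁‖x‖² ≤ f(x) ≤ β₂‖x‖²` for
`0 < ‖x‖ < γ`, then with `V(x) = −2 log((1/√2) log(1/‖x‖))`, the function `h₁ = V − log β₁`
is a supersolution and `h₂ = V − log β₂` is a subsolution of `Δh = f(x)‖x‖⁻⁴ e^h` on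
`{0 < ‖x‖ < γ}`. -/
theorem stmt3 (γ β₁ β₂ : ℝ) (hγ : 0 < γ) (hγ1 : γ < 1) (hβ₁ : 0 < β₁) (hβ₂ : 0 < β₂)
    (f : EuclideanSpace ℝ (Fin 2) → ℝ) (hf : Continuous f)
    (hbound : ∀ x : EuclideanSpace ℝ (Fin 2), 0 < ‖x‖ → ‖x‖ < γ →
      β₁ * ‖x‖ ^ 2 ≤ f x ∧ f x ≤ β₂ * ‖x‖ ^ 2)
    (V h₁ h₂ : EuclideanSpace ℝ (Fin 2) → ℝ)
    (hV : ∀ x, V x = -2 * Real.log ((1 / Real.sqrt 2) * Real.log (1 / ‖x‖)))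
    (hh₁ : ∀ x, h₁ x = V x - Real.log β₁)
    (hh₂ : ∀ x, h₂ x = V x - Real.log β₂) :
    ∀ x : EuclideanSpace ℝ (Fin 2), 0 < ‖x‖ → ‖x‖ < γ →
      laplacian h₁ x - f x * (‖x‖ ^ 4)⁻¹ * Real.exp (h₁ x) ≤ 0 ∧
      0 ≤ laplacian h₂ x - f x * (‖x‖ ^ 4)⁻¹ * Real.exp (h₂ x) :=
  stmt3_general γ β₁ β₂ hγ1 hβ₁ hβ₂ f hbound V h₁ h₂ hV hh₁ hh₂
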